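/- arXiv:2303.15402 — 2 statements merged into one kernel-verified Lean document; each statement's English description precedes it below -/
import Mathlib

section
/- The set J_{1/2} = J_{1/4} ∪ (J_{1/4} + (2,2)), where J_{1/4} = {(0,0),(1,0),(0,1),(−1,−1)} + 4ℤ², is I-stable and has upper density 1/2. -/
/-- Embed a lattice point into the plane. -/
def toR (p : ℤ × ℤ) : ℝ × ℝ := ((p.1 : ℝ), (p.2 : ℝ))

/-- Determinant of the 2×2 matrix with columns `u`, `v`. -/
def det2 (u v : ℤ × ℤ) : ℤ := u.1 * v.2 - u.2 * v.1

/-- The set of lattice points in the (closed) triangle with vertices `a b c`. -/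
def triPts (a b c : ℤ × ℤ) : Set (ℤ × ℤ) :=
  {p | toR p ∈ convexHull ℝ {toR a, toR b, toR c}}

/-- A border triangle: a lattice triangle with exactly 4 lattice points, whose
fourth point lies on the boundary (not in the interior). -/
def IsBorderTri (T : Set (ℤ × ℤ)) : Prop :=
  ∃ a b c d : ℤ × ℤ, det2 (b - a) (c - a) ≠ 0 ∧
    T = triPts a b c ∧ T = {a, b, c, d} ∧ T.ncard = 4 ∧
    toR d ∉ interior (convexHull ℝ {toR a, toR b, toR c})

/-- An internal triangle: a lattice triangle with exactly 4 lattice points, whose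
fourth point lies in the interior. -/
def IsInternalTri (T : Set (ℤ × ℤ)) : Prop :=
  ∃ a b c d : ℤ × ℤ, det2 (b - a) (c - a) ≠ 0 ∧
    T = triPts a b c ∧ T = {a, b, c, d} ∧ T.ncard = 4 ∧
    toR d ∈ interior (convexHull ℝ {toR a, toR b, toR c})

/-- `S` is B-stable: no border triangle has exactly three of its points in `S`. -/
def BStable (S : Set (ℤ × ℤ)) : Prop :=
  ∀ T, IsBorderTri T → (T ∩ S).ncard ≠ 3

/-- `S` is I-stable: no internal triangle has exactly three of its points in `S`. -/
def IStable (S : Set (ℤ × ℤ)) : Prop :=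
  ∀ T, IsInternalTri T → (T ∩ S).ncard ≠ 3

/-- Upper density of a subset of `ℤ²`. -/
noncomputable def upperDensity (S : Set (ℤ × ℤ)) : ℝ :=
  Filter.limsup (fun n : ℕ =>
    ((S ∩ Set.Icc (-(n : ℤ), -(n : ℤ)) ((n : ℤ), (n : ℤ))).ncard : ℝ) /
      (2 * (n : ℝ) + 1) ^ 2) Filter.atTop

/-- The set `J_{1/4} = {(0,0),(1,0),(0,1),(−1,−1)} + 4ℤ²`. -/
def J14 : Set (ℤ × ℤ) :=
  {p | ∃ m k : ℤ,
    p - (4 * m, 4 * k) ∈ ({(0, 0), (1, 0), (0, 1), (-1, -1)} : Set (ℤ × ℤ))}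

/-- The set `J_{1/2} = J_{1/4} ∪ (J_{1/4} + (2,2))`. -/
def J12 : Set (ℤ × ℤ) := J14 ∪ {p | p - (2, 2) ∈ J14}

/-!
Let `{a, b, c, d}` be an internal triangle with interior point `d`. The sub-triangles `abd`, `bcd`,
`cad` contain no lattice points besides their vertices, and an empty lattice triangle is
unimodular: otherwise reducing a suitable lattice point modulo the lattice spanned by two edges
gives a lattice point of the triangle that is not a vertex. The three sub-determinants are thus
`1`, so `det (b - a, c - a) = ±3` and Cramer's rule gives `3 d = a + b + c`.

Membership in `J_{1/2}` only depends on residues mod 4: a point lies in `J_{1/2}` iff both or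
neither of its coordinates are `0, 1 mod 4`. Hence I-stability reduces to a finite check over
`(ℤ/4)²`: for `A, B, C` with `det (B - A, C - A)` odd, never exactly three of
`A, B, C, -(A + B + C)` lie in the image of `J_{1/2}`.

For the density, `[-n, n]` contains `n` or `n + 1` integers that are `0, 1 mod 4`, so the box
`[-n, n]²` contains `n² + (n + 1)²` points of `J_{1/2}`.
-/

lemma ncard_setOf_mem_inter_eq_countP {α : Type*} {l : List α}
    (hl : {x | x ∈ l}.ncard = l.length) (S : Set α) [DecidablePred (· ∈ S)] :
    ({x | x ∈ l} ∩ S).ncard = l.countP (· ∈ S) := by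
  classical
  rw [← List.coe_toFinset, Set.ncard_coe_finset] at hl
  have hnd : l.Nodup := Multiset.toFinset_card_eq_card_iff_nodup.1 hl
  have hset : {x | x ∈ l} ∩ S = ↑(l.toFinset.filter (· ∈ S)) := by ext; simp
  rw [hset, Set.ncard_coe_finset, hnd.card_eq_countP]

section Geometry

open Set

lemma mem_Ioo_of_mem_interior_convexHull {E : Type*} [NormedAddCommGroup E] [NormedSpace ℝ E]
    [FiniteDimensional ℝ E] {f : E →ₗ[ℝ] ℝ} (hf : f ≠ 0) {s : Set E} {lo hi : ℝ}
    (hs : s ⊆ f ⁻¹' Icc lo hi) {w : E} (hw : w ∈ interior (convexHull ℝ s)) :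
    f w ∈ Ioo lo hi := by
  have hopen := f.isOpenMap_of_finiteDimensional (LinearMap.surjective_of_ne_zero hf)
  have hw' := interior_mono (convexHull_min hs ((convex_Icc lo hi).linear_preimage f)) hw
  rwa [← hopen.preimage_interior_eq_interior_preimage f.continuous_of_finiteDimensional,
    interior_Icc] at hw'

lemma smul_add_smul_add_smul_mem_convexHull {E : Type*} [AddCommGroup E] [Module ℝ E]
    {x y z : E} {r s t : ℝ} (hr : 0 ≤ r) (hs : 0 ≤ s) (ht : 0 ≤ t) (h : r + s + t = 1) :
    r • x + s • y + t • z ∈ convexHull ℝ {x, y, z} := by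
  have := (convex_convexHull ℝ {x, y, z}).sum_mem (t := Finset.univ) (w := ![r, s, t])
    (z := ![x, y, z]) (by simp [Fin.forall_fin_succ, *]) (by simp [Fin.sum_univ_three, h])
    (fun i _ => subset_convexHull ℝ _ (by fin_cases i <;> simp))
  simpa [Fin.sum_univ_three] using this

lemma insert_pair_rotate {α : Type*} (x y z : α) : ({y, z, x} : Set α) = {x, y, z} := by
  rw [pair_comm, insert_comm]

lemma det2_sub_right (u p q : ℤ × ℤ) : det2 u (p - q) = det2 u p - det2 u q := by
  simp only [det2, Prod.fst_sub, Prod.snd_sub]; ring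

lemma det2_zero_right (u : ℤ × ℤ) : det2 u 0 = 0 := by
  simp [det2]

lemma det2_self (u : ℤ × ℤ) : det2 u u = 0 := by
  simp only [det2]; ring

lemma det2_comm (u v : ℤ × ℤ) : det2 v u = - det2 u v := by
  simp only [det2]; ring

lemma det2_rotate (a b c : ℤ × ℤ) : det2 (c - b) (a - b) = det2 (b - a) (c - a) := by
  simp only [det2, Prod.fst_sub, Prod.snd_sub]; ring

lemma det2_smul_eq_add_smul (u v w : ℤ × ℤ) :
    det2 u v • w = det2 w v • u + det2 u w • v := by
  ext <;> simp only [det2, Prod.fst_add, Prod.snd_add, Prod.smul_fst, Prod.smul_snd,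
    smul_eq_mul] <;> ring

lemma exists_not_dvd_det2 (u v : ℤ × ℤ) (hD : 1 < det2 u v) :
    ∃ w, ¬ (det2 u v ∣ det2 w v ∧ det2 u v ∣ det2 u w) := by
  set D := det2 u v with hDdef
  by_contra! h
  obtain ⟨⟨h1, h2⟩, h3, h4⟩ := And.intro (h (1, 0)) (h (0, 1))
  simp only [det2, one_mul, zero_mul, mul_one, mul_zero, sub_zero, zero_sub, dvd_neg]
    at h1 h2 h3 h4
  have hDD : D * D ∣ D * 1 := by
    rw [mul_one]
    nth_rw 3 [hDdef]
    exact dvd_sub (mul_dvd_mul h4 h1) (mul_dvd_mul h2 h3)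
  have := Int.eq_one_of_dvd_one (by omega) ((mul_dvd_mul_iff_left (by omega)).1 hDD)
  omega

/-- `det2 p v / det2 u v` and `det2 u p / det2 u v` are the coordinates of `p` in the basis
`u, v` (Cramer's rule). -/
lemma exists_det2_coeffs_of_one_lt (u v : ℤ × ℤ) (hD : 1 < det2 u v) :
    ∃ p : ℤ × ℤ, 0 ≤ det2 p v ∧ 0 ≤ det2 u p ∧ det2 p v + det2 u p ≤ det2 u v ∧
      0 < det2 p v + det2 u p ∧ det2 p v < det2 u v ∧ det2 u p < det2 u v := by
  obtain ⟨w, hw⟩ := exists_not_dvd_det2 u v hD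
  set D := det2 u v with hDdef
  -- reduce `w` modulo the lattice spanned by `u` and `v`; if the result `p` lies in the far
  -- half of the fundamental parallelogram, `u + v - p` lies in the near one
  set m := det2 w v
  set n := det2 u w
  set p := w - (m / D) • u - (n / D) • v
  have hpm : det2 p v = m % D := by
    simp only [p, m, hDdef, det2, Prod.fst_sub, Prod.snd_sub, Prod.smul_fst, Prod.smul_snd,
      smul_eq_mul, Int.emod_def]
    ring
  have hpn : det2 u p = n % D := by
    simp only [p, n, hDdef, det2, Prod.fst_sub, Prod.snd_sub, Prod.smul_fst, Prod.smul_snd,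
      smul_eq_mul, Int.emod_def]
    ring
  have hnz : ¬ (m % D = 0 ∧ n % D = 0) :=
    fun h => hw ⟨Int.dvd_of_emod_eq_zero h.1, Int.dvd_of_emod_eq_zero h.2⟩
  have := Int.emod_nonneg m (by omega : D ≠ 0)
  have := Int.emod_nonneg n (by omega : D ≠ 0)
  have := Int.emod_lt_of_pos m (by omega : 0 < D)
  have := Int.emod_lt_of_pos n (by omega : 0 < D)
  by_cases h : m % D + n % D ≤ D
  · exact ⟨p, by omega⟩
  · refine ⟨u + v - p, ?_⟩
    have e1 : det2 (u + v - p) v = D - m % D := by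
      rw [← hpm]; simp only [hDdef, det2, Prod.fst_sub, Prod.snd_sub, Prod.fst_add, Prod.snd_add]
      ring
    have e2 : det2 u (u + v - p) = D - n % D := by
      rw [← hpn]; simp only [hDdef, det2, Prod.fst_sub, Prod.snd_sub, Prod.fst_add, Prod.snd_add]
      ring
    rw [e1, e2]
    omega

def cross (u : ℤ × ℤ) : ℝ × ℝ →ₗ[ℝ] ℝ :=
  (u.1 : ℝ) • LinearMap.snd ℝ ℝ ℝ - (u.2 : ℝ) • LinearMap.fst ℝ ℝ ℝ

lemma cross_toR (u p : ℤ × ℤ) : cross u (toR p) = det2 u p := by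
  simp [cross, toR, det2]

lemma cross_toR_eq (a b p : ℤ × ℤ) :
    cross (b - a) (toR p) = det2 (b - a) a + det2 (b - a) (p - a) := by
  rw [cross_toR, det2_sub_right]; push_cast; ring

section Triangle

variable {a b c d : ℤ × ℤ}

lemma det2_sub_mem_Ioo_of_mem_interior (hD : 0 < det2 (b - a) (c - a))
    (hd : toR d ∈ interior (convexHull ℝ {toR a, toR b, toR c})) :
    det2 (b - a) (d - a) ∈ Ioo 0 (det2 (b - a) (c - a)) := by
  have hDR : (0 : ℝ) < det2 (b - a) (c - a) := by exact_mod_cast hD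
  have hs : {toR a, toR b, toR c} ⊆ cross (b - a) ⁻¹'
      Icc (det2 (b - a) a) (det2 (b - a) a + det2 (b - a) (c - a)) := by
    simp only [insert_subset_iff, singleton_subset_iff, mem_preimage, cross_toR_eq, sub_self,
      det2_self, det2_zero_right, mem_Icc]
    refine ⟨⟨?_, ?_⟩, ⟨?_, ?_⟩, ?_, ?_⟩ <;> push_cast <;> linarith
  have hf : cross (b - a) ≠ 0 := by
    intro h
    have := congrArg (fun f => f (toR c) - f (toR a)) h
    simp only [cross_toR_eq, sub_self, det2_zero_right, Int.cast_zero, LinearMap.zero_apply] at this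
    linarith
  have := mem_Ioo_of_mem_interior_convexHull hf hs hd
  rw [mem_Ioo, cross_toR_eq] at this
  constructor
  · exact_mod_cast (by linarith [this.1] : (0 : ℝ) < det2 (b - a) (d - a))
  · exact_mod_cast (by linarith [this.2] : (det2 (b - a) (d - a) : ℝ) < det2 (b - a) (c - a))

lemma toR_notMem_convexHull (hδ : 0 ≤ det2 (b - a) (d - a))
    (hlt : det2 (b - a) (d - a) < det2 (b - a) (c - a)) :
    toR c ∉ convexHull ℝ {toR a, toR b, toR d} := by
  intro hc
  have hs : {toR a, toR b, toR d} ⊆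
      cross (b - a) ⁻¹' Iic (det2 (b - a) a + det2 (b - a) (d - a)) := by
    simp only [insert_subset_iff, singleton_subset_iff, mem_preimage, cross_toR_eq, sub_self,
      det2_self, det2_zero_right, mem_Iic]
    have : (0 : ℝ) ≤ det2 (b - a) (d - a) := by exact_mod_cast hδ
    refine ⟨?_, ?_, ?_⟩ <;> push_cast <;> linarith
  have := convexHull_min hs ((convex_Iic _).linear_preimage _) hc
  rw [mem_preimage, mem_Iic, cross_toR_eq] at this
  have : (det2 (b - a) (c - a) : ℝ) ≤ det2 (b - a) (d - a) := by linarith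
  exact absurd (Int.cast_le.1 this) (not_le.2 hlt)

lemma add_mem_triPts {p : ℤ × ℤ} (hD : 0 < det2 (b - a) (c - a)) (hm : 0 ≤ det2 p (c - a))
    (hn : 0 ≤ det2 (b - a) p) (hmn : det2 p (c - a) + det2 (b - a) p ≤ det2 (b - a) (c - a)) :
    a + p ∈ triPts a b c := by
  set D := det2 (b - a) (c - a)
  set m := det2 p (c - a)
  set n := det2 (b - a) p
  have hDR : (0 : ℝ) < D := by exact_mod_cast hD
  have hcr := det2_smul_eq_add_smul (b - a) (c - a) p
  have h1 := congrArg (fun q : ℤ × ℤ => (q.1 : ℝ)) hcr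
  have h2 := congrArg (fun q : ℤ × ℤ => (q.2 : ℝ)) hcr
  simp only [Prod.fst_add, Prod.snd_add, Prod.smul_fst, Prod.smul_snd, Prod.fst_sub,
    Prod.snd_sub, smul_eq_mul, Int.cast_add, Int.cast_mul, Int.cast_sub] at h1 h2
  have hcomb : toR (a + p) = (1 - m / D - n / D : ℝ) • toR a + (m / D : ℝ) • toR b
      + (n / D : ℝ) • toR c := by
    ext <;> simp only [toR, Prod.fst_add, Prod.snd_add, Prod.smul_fst, Prod.smul_snd,
      smul_eq_mul, Int.cast_add] <;> field_simp
    · linear_combination h1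
    · linear_combination h2
  change toR (a + p) ∈ convexHull ℝ {toR a, toR b, toR c}
  rw [hcomb]
  apply smul_add_smul_add_smul_mem_convexHull _ (by positivity) (by positivity) (by ring)
  rw [sub_sub, ← add_div, sub_nonneg, div_le_one hDR]
  exact_mod_cast hmn

lemma det2_eq_one_of_triPts_subset (hD : 0 < det2 (b - a) (c - a))
    (hsub : triPts a b c ⊆ {a, b, c}) : det2 (b - a) (c - a) = 1 := by
  by_contra hne
  obtain ⟨p, hm, hn, hmn, hpos, hmD, hnD⟩ :=
    exists_det2_coeffs_of_one_lt (b - a) (c - a) (by omega)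
  rcases hsub (add_mem_triPts hD hm hn hmn) with h | h | h
  · obtain rfl : p = 0 := add_eq_left.1 h
    simp [det2] at hpos
  · obtain rfl : p = b - a := eq_sub_of_add_eq' h
    omega
  · obtain rfl : p = c - a := eq_sub_of_add_eq' h
    omega

lemma det2_sub_eq_one_of_mem_interior (hD : 0 < det2 (b - a) (c - a))
    (hT : triPts a b c ⊆ insert d {a, b, c})
    (hd : toR d ∈ interior (convexHull ℝ {toR a, toR b, toR c})) :
    det2 (b - a) (d - a) = 1 := by
  obtain ⟨hpos, hlt⟩ := det2_sub_mem_Ioo_of_mem_interior hD hd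
  refine det2_eq_one_of_triPts_subset hpos fun x hx => ?_
  have hsub : {toR a, toR b, toR d} ⊆ convexHull ℝ {toR a, toR b, toR c} := by
    refine insert_subset (subset_convexHull ℝ _ (by simp)) (insert_subset
      (subset_convexHull ℝ _ (by simp)) (singleton_subset_iff.2 (interior_subset hd)))
  rcases hT (convexHull_min hsub (convex_convexHull ℝ _) hx) with rfl | rfl | rfl | rfl
  · simp
  · simp
  · simp
  · exact absurd hx (toR_notMem_convexHull hpos.le hlt)

theorem det2_eq_three_of_mem_interior (hD : 0 < det2 (b - a) (c - a))
    (hT : triPts a b c ⊆ insert d {a, b, c})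
    (hd : toR d ∈ interior (convexHull ℝ {toR a, toR b, toR c})) :
    det2 (b - a) (c - a) = 3 ∧ 3 • d = a + b + c := by
  have h1 := det2_sub_eq_one_of_mem_interior hD hT hd
  have h2 := det2_sub_eq_one_of_mem_interior (a := b) (b := c) (c := a) (d := d)
    (by rwa [det2_rotate]) (by simpa only [triPts, insert_pair_rotate] using hT)
    (by rwa [insert_pair_rotate])
  have h3 := det2_sub_eq_one_of_mem_interior (a := c) (b := a) (c := b) (d := d)
    (by rwa [det2_rotate, det2_rotate]) (by simpa only [triPts, insert_pair_rotate] using hT)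
    (by rwa [insert_pair_rotate, insert_pair_rotate])
  have hsum : det2 (b - a) (c - a)
      = det2 (c - b) (d - b) + det2 (a - c) (d - c) + det2 (b - a) (d - a) := by
    simp only [det2, Prod.fst_sub, Prod.snd_sub]; ring
  have hcramer : det2 (b - a) (c - a) • d
      = det2 (c - b) (d - b) • a + det2 (a - c) (d - c) • b + det2 (b - a) (d - a) • c := by
    ext <;> simp only [det2, Prod.fst_sub, Prod.snd_sub, Prod.fst_add, Prod.snd_add,
      Prod.smul_fst, Prod.smul_snd, smul_eq_mul] <;> ring
  rw [h1, h2, h3] at hsum hcramer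
  rw [hsum] at hcramer
  refine ⟨by omega, ?_⟩
  simpa using hcramer

lemma det2_eq_three_or_neg_three_of_mem_interior (hD : det2 (b - a) (c - a) ≠ 0)
    (hT : triPts a b c ⊆ insert d {a, b, c})
    (hd : toR d ∈ interior (convexHull ℝ {toR a, toR b, toR c})) :
    (det2 (b - a) (c - a) = 3 ∨ det2 (b - a) (c - a) = -3) ∧ 3 • d = a + b + c := by
  rcases hD.lt_or_gt with hneg | hpos
  · have hswap := det2_comm (b - a) (c - a)
    obtain ⟨h3, hd3⟩ := det2_eq_three_of_mem_interior (a := a) (b := c) (c := b) (d := d)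
      (by omega)
      (by simpa only [triPts, Set.pair_comm (toR c) (toR b), Set.pair_comm c b] using hT)
      (by rwa [Set.pair_comm (toR c) (toR b)])
    exact ⟨by omega, by rwa [add_right_comm]⟩
  · obtain ⟨h3, hd3⟩ := det2_eq_three_of_mem_interior hpos hT hd
    exact ⟨Or.inl h3, hd3⟩

end Triangle

end Geometry

section Membership

open Set

lemma mem_J14_iff (p : ℤ × ℤ) :
    p ∈ J14 ↔ (p.1 % 4, p.2 % 4) ∈ ({(0, 0), (1, 0), (0, 1), (3, 3)} : Set (ℤ × ℤ)) := by
  simp only [J14, mem_ofPred_eq, mem_insert_iff, mem_singleton_iff, Prod.ext_iff, Prod.fst_sub,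
    Prod.snd_sub]
  constructor
  · rintro ⟨m, k, h⟩
    omega
  · intro h
    exact ⟨(p.1 + 1) / 4, (p.2 + 1) / 4, by omega⟩

lemma mem_J12_iff (p : ℤ × ℤ) : p ∈ J12 ↔ (p.1 % 4 ≤ 1 ↔ p.2 % 4 ≤ 1) := by
  simp only [J12, mem_union, mem_ofPred_eq, mem_J14_iff, mem_insert_iff, mem_singleton_iff,
    Prod.ext_iff, Prod.fst_sub, Prod.snd_sub]
  omega

end Membership

def lowMod4 (x : ZMod 4) : Bool := x.val ≤ 1

def inJ12Mod4 (q : ZMod 4 × ZMod 4) : Bool := lowMod4 q.1 == lowMod4 q.2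

def det2Mod4 (u v : ZMod 4 × ZMod 4) : ZMod 4 := u.1 * v.2 - u.2 * v.1

def toMod4 : ℤ × ℤ →+ ZMod 4 × ZMod 4 := (Int.castAddHom _).prodMap (Int.castAddHom _)

@[simp]
lemma toMod4_apply (p : ℤ × ℤ) : toMod4 p = ((p.1 : ZMod 4), (p.2 : ZMod 4)) := rfl

lemma lowMod4_intCast (x : ℤ) : lowMod4 x = true ↔ x % 4 ≤ 1 := by
  have := ZMod.val_intCast (n := 4) x
  simp only [lowMod4, decide_eq_true_eq]
  omega

lemma mem_J12_iff_inJ12Mod4 (p : ℤ × ℤ) : p ∈ J12 ↔ inJ12Mod4 (toMod4 p) = true := by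
  rw [mem_J12_iff, inJ12Mod4, toMod4_apply, beq_iff_eq, ← lowMod4_intCast, ← lowMod4_intCast]
  cases lowMod4 p.1 <;> cases lowMod4 p.2 <;> simp

lemma intCast_det2 (u v : ℤ × ℤ) :
    ((det2 u v : ℤ) : ZMod 4) = det2Mod4 (toMod4 u) (toMod4 v) := by
  simp [det2, det2Mod4]

lemma countP_inJ12Mod4_ne_three : ∀ A B C : ZMod 4 × ZMod 4,
    det2Mod4 (B - A) (C - A) ^ 2 = 1 →
    [A, B, C, -(A + B + C)].countP inJ12Mod4 ≠ 3 := by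
  decide

theorem iStable_J12 : IStable J12 := by
  classical
  rintro T ⟨a, b, c, d, hdet, hTabc, hTabcd, hcard, hint⟩ h3
  have hsub : triPts a b c ⊆ insert d {a, b, c} := by
    rw [← hTabc, hTabcd]
    intro x
    simp only [Set.mem_insert_iff, Set.mem_singleton_iff]
    tauto
  obtain ⟨hdet3, hcent⟩ := det2_eq_three_or_neg_three_of_mem_interior hdet hsub hint
  have hT : T = {x | x ∈ [a, b, c, d]} := by rw [hTabcd]; ext; simp
  rw [hT, ncard_setOf_mem_inter_eq_countP (by rwa [← hT])] at h3
  have hd4 : toMod4 d = -(toMod4 a + toMod4 b + toMod4 c) := by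
    have h4 : (4 : ℕ) • toMod4 d = 0 := by
      ext <;> simp [nsmul_eq_mul, show (4 : ZMod 4) = 0 from rfl]
    refine (neg_eq_of_add_eq_zero_right ?_).symm
    rw [← map_add, ← map_add, ← hcent, ← map_add, ← succ_nsmul, map_nsmul, h4]
  have hdet4 : det2Mod4 (toMod4 b - toMod4 a) (toMod4 c - toMod4 a) ^ 2 = 1 := by
    rw [← map_sub, ← map_sub, ← intCast_det2, ← Int.cast_pow]
    rcases hdet3 with h | h <;> rw [h] <;> rfl
  refine countP_inJ12Mod4_ne_three _ _ _ hdet4 ?_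
  rw [← hd4, ← h3]
  change List.countP inJ12Mod4 ([a, b, c, d].map toMod4) = _
  rw [List.countP_map]
  exact List.countP_congr fun x _ => by simp [mem_J12_iff_inJ12Mod4]

section Counting

open Finset

lemma card_filter_emod_four_le_one_Ico (n : ℕ) :
    #{x ∈ Ico (-(n : ℤ)) n | x % 4 ≤ 1} = n := by
  -- `x ↦ -1 - x` maps `Ico (-n) n` to itself and swaps the residues `0, 1` with `3, 2`
  have hswap :
      #{x ∈ Ico (-(n : ℤ)) n | x % 4 ≤ 1} = #{x ∈ Ico (-(n : ℤ)) n | ¬ x % 4 ≤ 1} :=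
    card_nbij' (fun x => -1 - x) (fun x => -1 - x) (fun x hx => by simp at hx ⊢; omega)
      (fun x hx => by simp at hx ⊢; omega) (fun x _ => by simp) (fun x _ => by simp)
  have htot := card_filter_add_card_filter_not (s := Ico (-(n : ℤ)) n) (fun x => x % 4 ≤ 1)
  rw [Int.card_Ico] at htot
  omega

lemma card_filter_emod_four_le_one_Icc (n : ℕ) :
    #{x ∈ Icc (-(n : ℤ)) n | x % 4 ≤ 1} = n ∨
      #{x ∈ Icc (-(n : ℤ)) n | x % 4 ≤ 1} = n + 1 := by
  have h := card_filter_emod_four_le_one_Ico n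
  rw [← Ico_insert_right (by omega), filter_insert]
  split_ifs
  · rw [card_insert_of_notMem (by simp), h]
    exact Or.inr rfl
  · exact Or.inl h

lemma ncard_J12_inter_Icc (n : ℕ) :
    (J12 ∩ Set.Icc (-(n : ℤ), -(n : ℤ)) (n, n)).ncard = 2 * n ^ 2 + 2 * n + 1 := by
  have hlow := card_filter_emod_four_le_one_Icc n
  set I := Icc (-(n : ℤ)) n
  have hset : J12 ∩ Set.Icc (-(n : ℤ), -(n : ℤ)) (n, n) =
      ↑({x ∈ I | x % 4 ≤ 1} ×ˢ {x ∈ I | x % 4 ≤ 1} ∪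
        {x ∈ I | ¬ x % 4 ≤ 1} ×ˢ {x ∈ I | ¬ x % 4 ≤ 1}) := by
    ext ⟨x, y⟩
    simp only [Set.mem_inter_iff, mem_J12_iff, Set.mem_Icc, Prod.mk_le_mk, coe_union,
      coe_product, coe_filter, I, mem_Icc, Set.mem_union, Set.mem_prod, Set.mem_ofPred_eq]
    tauto
  have hdisj : Disjoint ({x ∈ I | x % 4 ≤ 1} ×ˢ {x ∈ I | x % 4 ≤ 1})
      ({x ∈ I | ¬ x % 4 ≤ 1} ×ˢ {x ∈ I | ¬ x % 4 ≤ 1}) :=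
    disjoint_product.2 (Or.inl (disjoint_filter_filter_not _ _ _))
  have htot : #{x ∈ I | x % 4 ≤ 1} + #{x ∈ I | ¬ x % 4 ≤ 1} = 2 * n + 1 := by
    rw [card_filter_add_card_filter_not, Int.card_Icc]
    omega
  rw [hset, Set.ncard_coe_finset, card_union_of_disjoint hdisj, card_product, card_product]
  rcases hlow with h | h
  · rw [h, show #{x ∈ I | ¬ x % 4 ≤ 1} = n + 1 by omega]; ring
  · rw [h, show #{x ∈ I | ¬ x % 4 ≤ 1} = n by omega]; ring

open Filter Topology in
lemma upperDensity_J12 : upperDensity J12 = 1 / 2 := by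
  have hratio : ∀ n : ℕ, ((J12 ∩ Set.Icc (-(n : ℤ), -(n : ℤ)) (n, n)).ncard : ℝ) /
      (2 * (n : ℝ) + 1) ^ 2 = 1 / 2 + 1 / 2 * ((2 * (n : ℝ) + 1) ^ 2)⁻¹ := by
    intro n
    rw [ncard_J12_inter_Icc]
    push_cast
    field_simp
    ring
  have hlim : Tendsto (fun n : ℕ => ((2 * n + 1 : ℝ) ^ 2)⁻¹) atTop (𝓝 0) :=
    (tendsto_pow_atTop two_ne_zero).comp
      (tendsto_atTop_add_const_right _ 1 (tendsto_natCast_atTop_atTop.const_mul_atTop two_pos))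
      |>.inv_tendsto_atTop
  unfold upperDensity
  rw [funext hratio, ((hlim.const_mul (1 / 2)).const_add (1 / 2)).limsup_eq]
  norm_num

end Counting

theorem stmt15 : IStable J12 ∧ upperDensity J12 = 1 / 2 :=
  ⟨iStable_J12, upperDensity_J12⟩
end

section
/- There exists a set X ⊆ ℤ that contains no three consecutive integers, such that X ∪ {x} contains three consecutive integers for every x ∈ ℤ \ X, and X is not periodic (there is no nonzero d with X + d = X). -/
theorem stmt18 :
    ∃ X : Set ℤ,
      (∀ m : ℤ, ¬({m, m + 1, m + 2} ⊆ X)) ∧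
      (∀ x : ℤ, x ∉ X → ∃ m : ℤ, {m, m + 1, m + 2} ⊆ X ∪ {x}) ∧
      (∀ d : ℤ, d ≠ 0 → (fun t => t + d) '' X ≠ X) := by
  use {n : ℤ | ¬((n ≤ 0 ∧ n % 3 = 0) ∨ (0 ≤ n ∧ n % 3 = 2))}
  refine ⟨?_, ?_, ?_⟩
  · intro m h
    have h1 := h (show m ∈ ({m, m + 1, m + 2} : Set ℤ) by simp)
    have h2 := h (show m + 1 ∈ ({m, m + 1, m + 2} : Set ℤ) by simp)
    have h3 := h (show m + 2 ∈ ({m, m + 1, m + 2} : Set ℤ) by simp)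
    simp only [Set.mem_setOf_eq] at h1 h2 h3
    omega
  · intro x hx
    simp only [Set.mem_setOf_eq, not_not] at hx
    by_cases h0 : x = 0
    · refine ⟨-2, ?_⟩
      intro y hy
      simp only [Set.mem_insert_iff, Set.mem_singleton_iff] at hy
      simp only [Set.mem_union, Set.mem_setOf_eq, Set.mem_singleton_iff]
      omega
    · refine ⟨x, ?_⟩
      intro y hy
      simp only [Set.mem_insert_iff, Set.mem_singleton_iff] at hy
      simp only [Set.mem_union, Set.mem_setOf_eq, Set.mem_singleton_iff]
      omega
  · intro d hd heq
    have h1 : ∀ n : ℤ, n ∈ {n : ℤ | ¬((n ≤ 0 ∧ n % 3 = 0) ∨ (0 ≤ n ∧ n % 3 = 2))} ↔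
        n + d ∈ {n : ℤ | ¬((n ≤ 0 ∧ n % 3 = 0) ∨ (0 ≤ n ∧ n % 3 = 2))} := by
      intro n
      constructor
      · intro h
        rw [← heq]
        exact ⟨n, h, rfl⟩
      · intro h
        rw [← heq] at h
        obtain ⟨a, ha, hae⟩ := h
        have hae' : a + d = n + d := hae
        have : a = n := by omega
        rwa [this] at ha
    have ha := h1 0
    have hb := h1 2
    have hc := h1 (3 * d)
    have he := h1 (-3 * d)
    simp only [Set.mem_setOf_eq] at ha hb hc he
    omega
end
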